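/- Let X ~ NegBin(k, 1/2) and let Y be a random variable whose conditional distribution given X is NegBin(max(X−1, 0), 1/2). Then E[Y] = k − 1 + 2^{−k} and Var[Y] ≤ 4k − 2 + 2^{1−k}. -/

import Mathlib

/-!
Conditionally on `X = x`, `Y` is `NegBin(m, 1/2)` with `m = (x - 1)₊`, whose first two moments
are `m` and `m (m + 2)`; both follow from the size-biasing identity
`(n + 1) · P_m(n + 1) = m · P_{m+1}(n)`. Averaging over `X`, `(x - 1)₊` differs from `x - 1` only
at `x = 0`, an atom of mass `2^{-k}`, so `E[Y] = k - 1 + 2^{-k}` and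
`E[Y²] = k (k + 2) - 1 + 2^{-k}`. The variance bound then reduces to Bernoulli's inequality
`1 - 2k ≤ 2^{-k}`.
-/

/-- The negative binomial pmf `NegBin(k, 1/2)`: probability that there are `m`
failures before the `k`-th success in fair coin flips,
`P[X = m] = C(m+k-1, m)·2^{-(m+k)}`. -/
noncomputable def negbin (k m : ℕ) : ℝ := (Nat.choose (m + k - 1) m : ℝ) / 2 ^ (m + k)

lemma negbin_zero_right (k : ℕ) : negbin k 0 = (1 / 2) ^ k := by
  simp [negbin]

lemma negbin_zero_left {y : ℕ} (hy : y ≠ 0) : negbin 0 y = 0 := by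
  simp [negbin, Nat.choose_eq_zero_of_lt (Nat.sub_one_lt hy)]

lemma negbin_succ (p n : ℕ) :
    negbin (p + 1) n = (n + p).choose p * (1 / 2) ^ n * (1 / 2) ^ (p + 1) := by
  rw [negbin, Nat.add_succ_sub_one, Nat.choose_symm_add, mul_assoc, ← pow_add, ← add_assoc]
  simp [div_eq_mul_inv]

lemma hasSum_negbin (m : ℕ) : HasSum (negbin m) 1 := by
  rcases m with _ | p
  · simpa [negbin_zero_right] using hasSum_single (f := negbin 0) 0 fun y => negbin_zero_left
  · have h := (hasSum_choose_mul_geometric_of_norm_lt_one (𝕜 := ℝ) p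
      (r := 1 / 2) (by norm_num)).mul_right ((1 / 2) ^ (p + 1))
    simp_rw [← negbin_succ] at h
    rwa [show (1 : ℝ) - 1 / 2 = 1 / 2 by norm_num, one_div_mul_cancel (by positivity)] at h

lemma negbin_succ_mul_succ (m n : ℕ) :
    negbin m (n + 1) * (n + 1) = m * negbin (m + 1) n := by
  have h := Nat.choose_succ_right_eq (n + m) n
  rw [Nat.add_sub_cancel_left] at h
  have hc : ((n + m).choose (n + 1) : ℝ) * (n + 1) = (n + m).choose n * m := by
    exact_mod_cast h
  rw [negbin, negbin, show n + 1 + m - 1 = n + m by omega, Nat.add_succ_sub_one,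
    show n + 1 + m = n + (m + 1) by omega, div_mul_eq_mul_div, hc]
  ring

lemma HasSum.negbin_mul_natCast_mul {m : ℕ} {f : ℕ → ℝ} {a : ℝ}
    (h : HasSum (fun n => negbin (m + 1) n * f (n + 1)) a) :
    HasSum (fun y => negbin m y * (y * f y)) (m * a) := by
  rw [← hasSum_nat_add_iff' 1]
  simp only [Finset.sum_range_one, CharP.cast_eq_zero, zero_mul, mul_zero, sub_zero]
  refine (h.mul_left (m : ℝ)).congr_fun fun n => ?_
  push_cast
  rw [← mul_assoc, negbin_succ_mul_succ, mul_assoc]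

lemma hasSum_negbin_mul_natCast (m : ℕ) : HasSum (fun y => negbin m y * y) m := by
  have h : HasSum (fun n => negbin (m + 1) n * 1) 1 := by simpa using hasSum_negbin (m + 1)
  simpa using h.negbin_mul_natCast_mul (f := fun _ => 1)

lemma hasSum_negbin_mul_natCast_sq (m : ℕ) :
    HasSum (fun y => negbin m y * (y : ℝ) ^ 2) (m * (m + 2)) := by
  have h : HasSum (fun n => negbin (m + 1) n * ((n + 1 : ℕ) : ℝ)) (m + 2) := by
    convert (hasSum_negbin_mul_natCast (m + 1)).add (hasSum_negbin (m + 1)) using 1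
    · push_cast
      simp_rw [mul_add_one]
    · push_cast
      ring
  simpa [sq] using h.negbin_mul_natCast_mul (f := fun y => (y : ℝ))

lemma tsum_tsum_mul_mul_of_hasSum {α β : Type*} {w : α → ℝ} {q : α → β → ℝ} {g : β → ℝ}
    {G : α → ℝ} (hq : ∀ a, HasSum (fun b => q a b * g b) (G a)) :
    ∑' a, ∑' b, w a * q a b * g b = ∑' a, w a * G a :=
  tsum_congr fun a => by simp_rw [mul_assoc, tsum_mul_left, (hq a).tsum_eq]

lemma HasSum.negbin_mul_comp_pred {k : ℕ} {φ : ℝ → ℝ} {a : ℝ}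
    (h : HasSum (fun x : ℕ => negbin k x * φ (x - 1)) a) :
    HasSum (fun x => negbin k x * φ ((x - 1 : ℕ) : ℝ)) (a + (φ 0 - φ (-1)) * (1 / 2) ^ k) := by
  refine (h.add (hasSum_ite_eq 0 ((φ 0 - φ (-1)) * (1 / 2) ^ k))).congr_fun fun x => ?_
  rcases x with _ | x
  · simp [negbin_zero_right]; ring
  · simp

lemma one_sub_two_mul_le_half_pow (k : ℕ) : 1 - 2 * (k : ℝ) ≤ (1 / 2) ^ k := by
  have h := one_add_mul_le_pow (a := (-(1 / 2) : ℝ)) (by norm_num) k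
  norm_num at h
  linarith [(by positivity : (0 : ℝ) ≤ k)]

/-- if `X ~ NegBin(k,1/2)` and, conditionally on `X`,
`Y ~ NegBin(max(X-1,0), 1/2)` (joint pmf `negbin k x · negbin (x-1) y`), then
`E[Y] = k - 1 + 2^{-k}` and `Var[Y] ≤ 4k - 2 + 2^{1-k}`. -/
theorem negbin_compound_mean_var (k : ℕ) :
    (∑' x : ℕ, ∑' y : ℕ, negbin k x * negbin (x - 1) y * y)
      = (k : ℝ) - 1 + (1 / 2) ^ k ∧
    (∑' x : ℕ, ∑' y : ℕ, negbin k x * negbin (x - 1) y * (y : ℝ) ^ 2)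
        - (∑' x : ℕ, ∑' y : ℕ, negbin k x * negbin (x - 1) y * y) ^ 2
      ≤ 4 * (k : ℝ) - 2 + 2 * (1 / 2) ^ k := by
  have hmean : ∑' x : ℕ, ∑' y : ℕ, negbin k x * negbin (x - 1) y * y
      = (k : ℝ) - 1 + (1 / 2) ^ k := by
    rw [tsum_tsum_mul_mul_of_hasSum fun x => hasSum_negbin_mul_natCast (x - 1)]
    have h := (hasSum_negbin_mul_natCast k).sub (hasSum_negbin k)
    simp_rw [← mul_sub_one] at h
    simpa using (h.negbin_mul_comp_pred (φ := id)).tsum_eq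
  have hsq : ∑' x : ℕ, ∑' y : ℕ, negbin k x * negbin (x - 1) y * (y : ℝ) ^ 2
      = (k : ℝ) * (k + 2) - 1 + (1 / 2) ^ k := by
    rw [tsum_tsum_mul_mul_of_hasSum fun x => hasSum_negbin_mul_natCast_sq (x - 1)]
    have h := (hasSum_negbin_mul_natCast_sq k).sub (hasSum_negbin k)
    simp_rw [← mul_sub_one, show ∀ t : ℝ, t ^ 2 - 1 = (t - 1) * (t - 1 + 2) by intro t; ring] at h
    rw [(h.negbin_mul_comp_pred (φ := fun t => t * (t + 2))).tsum_eq]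
    norm_num
  refine ⟨hmean, ?_⟩
  rw [hmean, hsq]
  have hp : (0 : ℝ) ≤ (1 / 2) ^ k := by positivity
  nlinarith [mul_le_mul_of_nonneg_left (one_sub_two_mul_le_half_pow k) hp]
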